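/- If f : U → ℂ is holomorphic and injective on an open set U ⊆ ℂ, then its derivative is nowhere zero on U. -/

import Mathlib

/-!
If `f'(z₀) = 0` and `f` is not locally constant, then `f - f z₀` vanishes to some order `n ≥ 2`
at `z₀`, so near `z₀` it is `φ ^ n` for a holomorphic `φ` with `φ(z₀) = 0 ≠ φ'(z₀)`. By the
inverse function theorem `φ` maps every neighbourhood of `z₀` onto a neighbourhood of `0`, which
contains two points `a ≠ ζ a` with `ζ` a primitive `n`-th root of unity; their preimages are
distinct points with the same value of `f`.
-/

open Filter Set Topology

theorem AnalyticAt.two_le_analyticOrderAt_sub {𝕜 E : Type*} [NontriviallyNormedField 𝕜]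
    [CharZero 𝕜] [NormedAddCommGroup E] [NormedSpace 𝕜 E] [CompleteSpace E] {f : 𝕜 → E} {x : 𝕜}
    (hf : AnalyticAt 𝕜 f x) (hf' : deriv f x = 0) :
    2 ≤ analyticOrderAt (f · - f x) x := by
  have h : 1 ≤ analyticOrderAt (deriv f) x :=
    Order.one_le_iff_ne_zero.mpr (hf.deriv.analyticOrderAt_ne_zero.mpr hf')
  calc (2 : ℕ∞) = 1 + 1 := one_add_one_eq_two.symm
    _ ≤ analyticOrderAt (deriv f) x + 1 := by gcongr
    _ = analyticOrderAt (f · - f x) x := hf.analyticOrderAt_deriv_add_one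

theorem not_injOn_of_eventually_eq_self {X Y : Type*} [TopologicalSpace X] {x : X}
    [(𝓝[≠] x).NeBot] {f : X → Y} (hf : ∀ᶠ y in 𝓝 x, f y = f x) {s : Set X} (hs : s ∈ 𝓝 x) :
    ¬ InjOn f s := by
  intro hinj
  obtain ⟨y, ⟨hfy, hys⟩, hyx⟩ :=
    ((eventually_nhdsWithin_of_eventually_nhds (hf.and hs)).and
      (self_mem_nhdsWithin : {x}ᶜ ∈ 𝓝[≠] x)).exists
  exact hyx (hinj hys (mem_of_mem_nhds hs) hfy)

namespace Complex

theorem not_injOn_pow_of_mem_nhds_zero {n : ℕ} (hn : 2 ≤ n) {s : Set ℂ} (hs : s ∈ 𝓝 0) :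
    ¬ InjOn (· ^ n) s := by
  intro hinj
  obtain ⟨ζ, hζ⟩ : ∃ ζ : ℂ, IsPrimitiveRoot ζ n := ⟨_, isPrimitiveRoot_exp n (by omega)⟩
  have hζs : ∀ᶠ a in 𝓝 0, ζ * a ∈ s :=
    (continuous_const_mul ζ).tendsto' 0 0 (mul_zero ζ) hs
  obtain ⟨a, ⟨has, hζas⟩, ha0⟩ :=
    ((eventually_nhdsWithin_of_eventually_nhds (Eventually.and hs hζs)).and
      (self_mem_nhdsWithin : {0}ᶜ ∈ 𝓝[≠] (0 : ℂ))).exists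
  have hpow : a ^ n = (ζ * a) ^ n := by rw [mul_pow, hζ.pow_eq_one, one_mul]
  have : (ζ - 1) * a = 0 := by linear_combination -(hinj has hζas hpow)
  rcases mul_eq_zero.mp this with hζ1 | ha
  · exact hζ.ne_one (by omega) (sub_eq_zero.mp hζ1)
  · exact ha0 ha

end Complex

open Complex

theorem AnalyticAt.exists_pow_eq {h : ℂ → ℂ} {z₀ : ℂ} (hh : AnalyticAt ℂ h z₀) (hz₀ : h z₀ ≠ 0)
    {n : ℕ} (hn : n ≠ 0) : ∃ k : ℂ → ℂ, AnalyticAt ℂ k z₀ ∧ ∀ w, k w ^ n = h w := by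
  refine ⟨fun w => h z₀ ^ (n⁻¹ : ℂ) * (h w / h z₀) ^ (n⁻¹ : ℂ), ?_, fun w => ?_⟩
  · refine analyticAt_const.mul ((hh.div analyticAt_const hz₀).cpow analyticAt_const ?_)
    simp [div_self hz₀]
  · rw [mul_pow, cpow_nat_inv_pow _ hn, cpow_nat_inv_pow _ hn, mul_div_cancel₀ _ hz₀]

theorem AnalyticAt.exists_eventuallyEq_add_pow {f : ℂ → ℂ} {z₀ : ℂ} (hf : AnalyticAt ℂ f z₀)
    {n : ℕ} (hn : analyticOrderAt (f · - f z₀) z₀ = n) :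
    ∃ φ : ℂ → ℂ, ∃ d ≠ 0, HasStrictDerivAt φ d z₀ ∧ φ z₀ = 0 ∧
      ∀ᶠ w in 𝓝 z₀, f w = f z₀ + φ w ^ n := by
  have hfa : AnalyticAt ℂ (f · - f z₀) z₀ := hf.sub analyticAt_const
  obtain ⟨h, hh, hz₀, hfh⟩ := hfa.analyticOrderAt_eq_natCast.mp hn
  have hn0 : n ≠ 0 := by
    rintro rfl
    exact hfa.analyticOrderAt_ne_zero.mpr (sub_self _) (by exact_mod_cast hn)
  obtain ⟨k, hk, hkh⟩ := AnalyticAt.exists_pow_eq hh hz₀ hn0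
  have hφ : HasStrictDerivAt (fun w => (w - z₀) * k w) (k z₀) z₀ := by
    have hsub : HasStrictDerivAt (· - z₀) 1 z₀ := (hasStrictDerivAt_id z₀).sub_const z₀
    simpa using hsub.fun_mul hk.hasStrictDerivAt
  refine ⟨_, k z₀, fun h0 => hz₀ ?_, hφ, by simp, ?_⟩
  · rw [← hkh, h0, zero_pow hn0]
  · filter_upwards [hfh] with w hw
    rw [mul_pow, hkh, ← smul_eq_mul, ← hw]
    ring

theorem not_injOn_of_eventuallyEq_add_pow {f φ : ℂ → ℂ} {z₀ d : ℂ} {n : ℕ} (hn : 2 ≤ n)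
    (hd : d ≠ 0) (hφ : HasStrictDerivAt φ d z₀) (hφz₀ : φ z₀ = 0)
    (hfφ : ∀ᶠ w in 𝓝 z₀, f w = f z₀ + φ w ^ n) {s : Set ℂ} (hs : s ∈ 𝓝 z₀) :
    ¬ InjOn f s := by
  intro hinj
  set t := s ∩ {w | f w = f z₀ + φ w ^ n}
  have ht : t ∈ 𝓝 z₀ := inter_mem hs hfφ
  have hinj' : InjOn ((· ^ n) ∘ φ) t := fun w₁ hw₁ w₂ hw₂ h =>
    hinj hw₁.1 hw₂.1 (by rw [hw₁.2, hw₂.2]; exact congrArg _ h)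
  have himage : φ '' t ∈ 𝓝 0 := by
    rw [← hφz₀, ← hφ.map_nhds_eq hd]
    exact image_mem_map ht
  exact not_injOn_pow_of_mem_nhds_zero hn himage hinj'.image_of_comp

/-- An injective holomorphic function on an open set has nowhere vanishing
derivative. -/
theorem stmt15 (U : Set ℂ) (hU : IsOpen U) (f : ℂ → ℂ)
    (hf : DifferentiableOn ℂ f U) (hinj : Set.InjOn f U) :
    ∀ z ∈ U, deriv f z ≠ 0 := by
  intro z hz hdf
  have hUz : U ∈ 𝓝 z := hU.mem_nhds hz
  have hfa : AnalyticAt ℂ f z := hf.analyticAt hUz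
  cases horder : analyticOrderAt (f · - f z) z with
  | top =>
    have hconst : ∀ᶠ w in 𝓝 z, f w = f z := by
      simpa [sub_eq_zero] using analyticOrderAt_eq_top.mp horder
    exact not_injOn_of_eventually_eq_self hconst hUz hinj
  | coe n =>
    have hn : 2 ≤ n := by
      exact_mod_cast horder ▸ hfa.two_le_analyticOrderAt_sub hdf
    obtain ⟨φ, d, hd, hφ, hφz, hfφ⟩ := hfa.exists_eventuallyEq_add_pow horder
    exact not_injOn_of_eventuallyEq_add_pow hn hd hφ hφz hfφ hUz hinj
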